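/- Graph Slepians satisfy double orthogonality: if ẑ₁, ẑ₂ ∈ ℝⁿ are bandlimited eigenvectors of C (i.e. S_B ẑₖ = ẑₖ and C ẑₖ = μₖ ẑₖ for k = 1, 2) with ẑ₁ᵀ ẑ₂ = 0, then the Slepian vectors z₁ = U ẑ₁ and z₂ = U ẑ₂ satisfy both z₁ᵀ z₂ = 0 (orthogonality over the entire graph) and z₁ᵀ S_V z₂ = 0 (orthogonality over the selected vertex set). -/
import Mathlib


open Matrix

lemma aux_mulVec_dot (n : ℕ) (M : Matrix (Fin n) (Fin n) ℝ) (x y : Fin n → ℝ) :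
    (M *ᵥ x) ⬝ᵥ y = x ⬝ᵥ (Mᵀ *ᵥ y) := by
  rw [dotProduct_mulVec, vecMul_transpose]

/-- Double orthogonality of graph Slepians. -/
theorem stmt_7 (n : ℕ) (hn : 0 < n)
    (U S_B S_V : Matrix (Fin n) (Fin n) ℝ)
    (hU : Uᵀ * U = 1)
    (b v : Fin n → ℝ)
    (hSB : S_B = Matrix.diagonal b) (hb : ∀ i, b i = 0 ∨ b i = 1)
    (hSV : S_V = Matrix.diagonal v) (hv : ∀ i, v i = 0 ∨ v i = 1)
    (C : Matrix (Fin n) (Fin n) ℝ) (hC : C = S_Bᵀ * Uᵀ * S_V * U * S_B)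
    (zhat₁ zhat₂ : Fin n → ℝ) (μ₁ μ₂ : ℝ)
    (hb₁ : S_B.mulVec zhat₁ = zhat₁) (hb₂ : S_B.mulVec zhat₂ = zhat₂)
    (he₁ : C.mulVec zhat₁ = μ₁ • zhat₁) (he₂ : C.mulVec zhat₂ = μ₂ • zhat₂)
    (horth : zhat₁ ⬝ᵥ zhat₂ = 0)
    (z₁ z₂ : Fin n → ℝ) (hz₁ : z₁ = U.mulVec zhat₁) (hz₂ : z₂ = U.mulVec zhat₂) :
    z₁ ⬝ᵥ z₂ = 0 ∧ z₁ ⬝ᵥ S_V.mulVec z₂ = 0 := by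
  have hSBsymm : S_Bᵀ = S_B := by rw [hSB, Matrix.diagonal_transpose]
  constructor
  · rw [hz₁, hz₂, dotProduct_mulVec, ← mulVec_transpose, mulVec_mulVec, hU,
      one_mulVec, horth]
  · have key : zhat₁ ⬝ᵥ C *ᵥ zhat₂ = z₁ ⬝ᵥ S_V *ᵥ z₂ := by
      rw [hC, hSBsymm, hz₁, hz₂]
      simp only [← mulVec_mulVec]
      rw [hb₂]
      nth_rewrite 1 [← hSBsymm]
      rw [← aux_mulVec_dot, hb₁, ← aux_mulVec_dot]
    rw [← key, he₂, dotProduct_smul, horth, smul_zero]
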